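/- arXiv:1505.04468 — 2 statements merged into one kernel-verified Lean document; each statement's English description precedes it below -/
import Mathlib

section
/- Let X be a normal commutator-closed subset of a group G (i.e., X is closed under conjugation by elements of G and [x,y] ∈ X whenever x,y ∈ X), and assume every element of X has finite order. If G is soluble and generated by finitely many elements of X, then G is finite. -/
/-!
Induction on the derived length. If `G` is generated by finitely many elements of `X`, these have
finite order, so the abelianization `G/G'` is a finitely generated torsion abelian group, hence
finite; by Schreier's lemma `G'` is finitely generated. Since `X` is normal and commutator-closed,
`⟨X ∩ G'⟩` is a normal subgroup containing the commutators of the generators of `G`, so it is `G'`,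
and finitely many elements of `X ∩ G'` already generate `G'`. Now `G'` is soluble of smaller
derived length and `X ∩ G'` satisfies the same hypotheses in `G'`, so `G'` is finite, and so is `G`.
-/

open scoped commutatorElement

open Subgroup

section

variable {G : Type*} [Group G]

theorem Subgroup.closure_normal_of_conj_mem {Z : Set G}
    (hZ : ∀ g x : G, x ∈ Z → g * x * g⁻¹ ∈ Z) : (closure Z).Normal := by
  have hconj : Group.conjugatesOfSet Z ⊆ Z := fun y hy => by
    obtain ⟨x, hx, hxy⟩ := Group.mem_conjugatesOfSet_iff.mp hy
    obtain ⟨g, rfl⟩ := isConj_iff.mp hxy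
    exact hZ g x hx
  rw [le_antisymm (closure_mono Group.subset_conjugatesOfSet) (closure_mono hconj)]
  exact normalClosure_normal

theorem Subgroup.exists_finite_subset_of_mem_closure {Z : Set G} {g : G} (hg : g ∈ closure Z) :
    ∃ W ⊆ Z, W.Finite ∧ g ∈ closure W := by
  induction hg using closure_induction with
  | mem x hx => exact ⟨{x}, by simpa using hx, Set.finite_singleton x, subset_closure rfl⟩
  | one => exact ⟨∅, Set.empty_subset Z, Set.finite_empty, one_mem _⟩
  | mul x y _ _ hx hy =>
    obtain ⟨W₁, hW₁Z, hW₁, hx⟩ := hx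
    obtain ⟨W₂, hW₂Z, hW₂, hy⟩ := hy
    exact ⟨W₁ ∪ W₂, Set.union_subset hW₁Z hW₂Z, hW₁.union hW₂,
      mul_mem (closure_mono Set.subset_union_left hx) (closure_mono Set.subset_union_right hy)⟩
  | inv x _ hx =>
    obtain ⟨W, hWZ, hW, hx⟩ := hx
    exact ⟨W, hWZ, hW, inv_mem hx⟩

theorem Subgroup.FG.exists_finite_subset_closure_eq {Z : Set G} (h : (closure Z).FG) :
    ∃ W ⊆ Z, W.Finite ∧ closure W = closure Z := by
  obtain ⟨T, hT⟩ := h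
  choose W hWZ hW hmem using fun t : T =>
    exists_finite_subset_of_mem_closure (hT ▸ subset_closure t.2 : (t : G) ∈ closure Z)
  refine ⟨⋃ t, W t, Set.iUnion_subset hWZ, Set.finite_iUnion hW,
    le_antisymm (closure_mono (Set.iUnion_subset hWZ)) ?_⟩
  rw [← hT, closure_le]
  exact fun t ht => closure_mono (Set.subset_iUnion W ⟨t, ht⟩) (hmem ⟨t, ht⟩)

theorem Subgroup.closure_preimage_subtype_eq_top {H : Subgroup G} {W : Set G}
    (h : closure W = H) : closure (H.subtype ⁻¹' W) = ⊤ := by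
  subst h
  exact closure_preimage_eq_top W

theorem commutator_le_of_commutatorElement_mem {T : Set G} (hT : closure T = ⊤)
    {N : Subgroup G} [N.Normal] (h : ∀ s ∈ T, ∀ t ∈ T, ⁅s, t⁆ ∈ N) : commutator G ≤ N := by
  rw [← Subgroup.Normal.quotient_commutative_iff_commutator_le]
  let π := QuotientGroup.mk' N
  have hgen : closure (π '' T) = ⊤ := by
    rw [← MonoidHom.map_closure, hT, map_top_of_surjective _ (QuotientGroup.mk'_surjective N)]
  have hcomm : ∀ x ∈ π '' T, ∀ y ∈ π '' T, x * y = y * x := by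
    rintro _ ⟨s, hs, rfl⟩ _ ⟨t, ht, rfl⟩
    rw [← commutatorElement_eq_one_iff_mul_comm, ← map_commutatorElement, QuotientGroup.mk'_apply,
      QuotientGroup.eq_one_iff]
    exact h s hs t ht
  have hcent := closure_le_centralizer_centralizer (π '' T)
  rw [hgen] at hcent
  exact ⟨⟨fun x y => Set.centralizer_centralizer_comm_of_comm hcomm x (hcent (mem_top x)) y
    (hcent (mem_top y))⟩⟩

theorem CommGroup.finite_of_closure_eq_top_of_isOfFinOrder {A : Type*} [CommGroup A] {T : Set A}
    (hT : T.Finite) (hgen : closure T = ⊤) (hord : ∀ t ∈ T, IsOfFinOrder t) : Finite A := by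
  have : Group.FG A := Group.fg_iff.mpr ⟨T, hgen, hT⟩
  refine finite_of_fg_isMulTorsion A fun a => ?_
  have hle : closure T ≤ CommGroup.torsion A := (closure_le _).mpr hord
  exact hle (hgen ▸ mem_top a)

theorem finiteIndex_commutator_of_isOfFinOrder {T : Set G} (hT : T.Finite)
    (hgen : closure T = ⊤) (hord : ∀ t ∈ T, IsOfFinOrder t) : (commutator G).FiniteIndex := by
  have hab : Finite (Abelianization G) := by
    refine CommGroup.finite_of_closure_eq_top_of_isOfFinOrder (hT.image Abelianization.of) ?_ ?_
    · rw [← MonoidHom.map_closure, hgen]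
      exact map_top_of_surjective _ QuotientGroup.mk_surjective
    · rintro _ ⟨t, ht, rfl⟩
      exact Abelianization.of.isOfFinOrder (hord t ht)
  have : Finite (G ⧸ commutator G) := hab
  exact finiteIndex_of_finite_quotient

theorem map_subtype_derivedSeries_commutator (n : ℕ) :
    (derivedSeries (commutator G) n).map (commutator G).subtype = derivedSeries G (n + 1) := by
  induction n with
  | zero => rw [derivedSeries_zero, ← MonoidHom.range_eq_map, range_subtype, derivedSeries_one]
  | succ n ih => rw [derivedSeries_succ, map_commutator, ih, ← derivedSeries_succ]

structure IsNormalCommutatorClosed (X : Set G) : Prop where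
  conj_mem : ∀ g x : G, x ∈ X → g * x * g⁻¹ ∈ X
  commutatorElement_mem : ∀ x y : G, x ∈ X → y ∈ X → ⁅x, y⁆ ∈ X

namespace IsNormalCommutatorClosed

variable {X : Set G}

theorem preimage_subtype (hX : IsNormalCommutatorClosed X) (H : Subgroup G) :
    IsNormalCommutatorClosed (H.subtype ⁻¹' X) where
  conj_mem g x hx := hX.conj_mem g x hx
  commutatorElement_mem x y hx hy := by
    simpa only [Set.mem_preimage, map_commutatorElement] using hX.commutatorElement_mem _ _ hx hy

theorem closure_inter_commutator (hX : IsNormalCommutatorClosed X) {T : Set G}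
    (hTX : T ⊆ X) (hgen : closure T = ⊤) : closure (X ∩ commutator G) = commutator G := by
  have : (closure (X ∩ commutator G)).Normal := closure_normal_of_conj_mem fun g x hx =>
    ⟨hX.conj_mem g x hx.1, (commutator_normal ⊤ ⊤).conj_mem x hx.2 g⟩
  refine le_antisymm ((closure_le _).mpr Set.inter_subset_right) ?_
  refine commutator_le_of_commutatorElement_mem hgen fun s hs t ht => subset_closure ?_
  exact ⟨hX.commutatorElement_mem s t (hTX hs) (hTX ht),
    commutator_mem_commutator (mem_top s) (mem_top t)⟩

theorem exists_finite_closure_eq_commutator (hX : IsNormalCommutatorClosed X) {T : Set G}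
    (hTX : T ⊆ X) (hT : T.Finite) (hgen : closure T = ⊤) (hord : ∀ t ∈ T, IsOfFinOrder t) :
    ∃ W ⊆ (commutator G).subtype ⁻¹' X, W.Finite ∧ closure W = ⊤ := by
  have : Group.FG G := Group.fg_iff.mpr ⟨T, hgen, hT⟩
  have : (commutator G).FiniteIndex := finiteIndex_commutator_of_isOfFinOrder hT hgen hord
  have hZ := hX.closure_inter_commutator hTX hgen
  have hfg : (closure (X ∩ commutator G)).FG := by
    rw [hZ, ← Group.fg_iff_subgroup_fg]
    exact fg_of_index_ne_zero _
  obtain ⟨W, hWZ, hW, hWc⟩ := hfg.exists_finite_subset_closure_eq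
  refine ⟨(commutator G).subtype ⁻¹' W, fun x hx => (hWZ hx).1,
    hW.preimage (subtype_injective _).injOn, closure_preimage_subtype_eq_top (hWc.trans hZ)⟩

theorem finite_of_derivedSeries_eq_bot (hX : IsNormalCommutatorClosed X)
    (hord : ∀ x ∈ X, IsOfFinOrder x) {n : ℕ} (hn : derivedSeries G n = ⊥) {T : Set G}
    (hTX : T ⊆ X) (hT : T.Finite) (hgen : closure T = ⊤) : Finite G := by
  induction n generalizing G with
  | zero =>
    rw [derivedSeries_zero] at hn
    have htop : Finite (⊤ : Subgroup G) := by rw [hn]; infer_instance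
    exact (finite_iff_finite_and_finiteIndex ⊤).mpr ⟨htop, inferInstance⟩
  | succ n ih =>
    have hordT : ∀ t ∈ T, IsOfFinOrder t := fun t ht => hord t (hTX ht)
    have hindex := finiteIndex_commutator_of_isOfFinOrder hT hgen hordT
    obtain ⟨W, hWX, hW, hWgen⟩ := hX.exists_finite_closure_eq_commutator hTX hT hgen hordT
    have hn' : derivedSeries (commutator G) n = ⊥ := by
      rw [← map_eq_bot_iff_of_injective _ (subtype_injective _),
        map_subtype_derivedSeries_commutator, hn]
    have hfin : Finite (commutator G) := ih (hX.preimage_subtype _)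
      (fun x hx => (subtype_injective _).isOfFinOrder_iff.mp (hord x hx)) hn' hWX hW hWgen
    exact (finite_iff_finite_and_finiteIndex (commutator G)).mpr ⟨hfin, hindex⟩

end IsNormalCommutatorClosed

end

theorem commutator_closed_finite (G : Type*) [Group G] (X : Set G)
    (hconj : ∀ g x : G, x ∈ X → g * x * g⁻¹ ∈ X)
    (hcomm : ∀ x y : G, x ∈ X → y ∈ X → ⁅x, y⁆ ∈ X)
    (hord : ∀ x ∈ X, IsOfFinOrder x)
    (hsol : IsSolvable G)
    (hgen : ∃ S : Finset G, ↑S ⊆ X ∧ Subgroup.closure (S : Set G) = ⊤) :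
    Finite G := by
  obtain ⟨n, hn⟩ := hsol.solvable
  obtain ⟨S, hSX, hS⟩ := hgen
  exact IsNormalCommutatorClosed.finite_of_derivedSeries_eq_bot ⟨hconj, hcomm⟩ hord hn hSX
    S.finite_toSet hS
end

section
/- Let G be a finitely generated residually-p group (for a prime p) with no nonabelian free subgroup. If G is virtually soluble, then G is soluble. More precisely: a virtually soluble residually-p group is soluble. -/
/-- `G` is residually-`p`: every nontrivial element avoids a normal subgroup of
finite `p`-power index. -/
def ResiduallyP (G : Type*) [Group G] (p : ℕ) : Prop :=
  ∀ g : G, g ≠ 1 → ∃ N : Subgroup G, N.Normal ∧ (∃ e : ℕ, N.index = p ^ e) ∧ g ∉ N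

/-- If the derived series reaches `K` by step `a`, then after `b` more steps it is
inside the image of the `b`-th derived subgroup of `K`. -/
lemma derivedSeries_add_le_map {G : Type*} [Group G] (K : Subgroup G) (a b : ℕ)
    (h : derivedSeries G a ≤ K) :
    derivedSeries G (a + b) ≤ (derivedSeries ↥K b).map K.subtype := by
  induction b with
  | zero =>
      simpa [derivedSeries_zero, ← MonoidHom.range_eq_map, K.range_subtype] using h
  | succ b ih =>
      have : a + (b + 1) = (a + b) + 1 := by omega
      rw [this, derivedSeries_succ, derivedSeries_succ, Subgroup.map_commutator]
      exact Subgroup.commutator_mono ih ih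

/-- Once the derived series is trivial, it stays trivial. -/
lemma derivedSeries_eq_bot_mono {G : Type*} [Group G] {k n : ℕ} (hkn : k ≤ n)
    (h : derivedSeries G k = ⊥) : derivedSeries G n = ⊥ := by
  obtain ⟨j, rfl⟩ := Nat.exists_eq_add_of_le hkn
  induction j with
  | zero => simpa using h
  | succ j ih =>
      have : k + (j + 1) = (k + j) + 1 := by omega
      rw [this, derivedSeries_succ, ih (Nat.le_add_right _ _)]
      simp

/-- A finite solvable group of cardinality at most `M` has derived length at most `M`. -/
lemma derivedSeries_eq_bot_of_card_le :
    ∀ (M : ℕ) (P : Type*) [Group P] [Finite P], IsSolvable P → Nat.card P ≤ M →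
      derivedSeries P M = ⊥ := by
  intro M
  induction M with
  | zero =>
      intro P _ _ _ hcard
      have := Nat.card_pos (α := P)
      omega
  | succ M ih =>
      intro P _ _ hs hcard
      rcases subsingleton_or_nontrivial P with hP | hP
      · exact Subsingleton.elim _ _
      · -- the commutator subgroup is proper
        have hne : derivedSeries P 1 ≠ ⊤ := by
          intro htop
          have hall : ∀ n, derivedSeries P n = ⊤ := by
            intro n
            induction n with
            | zero => exact derivedSeries_zero P
            | succ n ihn =>
                rw [derivedSeries_succ, ihn]
                have h1 := derivedSeries_succ P 0
                rw [derivedSeries_zero] at h1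
                rw [← h1]
                exact htop
          obtain ⟨n, hn⟩ := hs.solvable
          rw [hall n] at hn
          exact absurd hn.symm (by simpa using (Subgroup.bot_ne_top (G := P)))
        set K : Subgroup P := derivedSeries P 1 with hK
        have hidx1 : K.index ≠ 1 := fun h => hne (Subgroup.index_eq_one.mp h)
        have hmul : K.index * Nat.card ↥K = Nat.card P := Subgroup.index_mul_card K
        have hKpos : 0 < Nat.card ↥K := Nat.card_pos
        have hidx0 : K.index ≠ 0 := by
          intro h0
          rw [h0, zero_mul] at hmul
          have := Nat.card_pos (α := P)
          omega
        have h2 : 2 ≤ K.index := by omega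
        have hcardK : Nat.card ↥K ≤ M := by nlinarith [Nat.card_pos (α := P)]
        have hbot : derivedSeries ↥K M = ⊥ := ih ↥K (by haveI : Group.IsSolvable P := hs; exact (inferInstance : Group.IsSolvable ↥K)) hcardK
        have := derivedSeries_add_le_map K 1 M le_rfl
        rw [hbot, Subgroup.map_bot] at this
        have h1M : 1 + M = M + 1 := by omega
        rw [h1M] at this
        exact le_bot_iff.mp this

/-- Quantitative bound: a finite solvable group with a subgroup of derived length `d`
and index `i` has derived length at most `i ! + d`. -/
lemma derivedSeries_eq_bot_of_subgroup {Q : Type*} [Group Q] [Finite Q] [Group.IsSolvable Q]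
    (H' : Subgroup Q) (d : ℕ) (hd : derivedSeries ↥H' d = ⊥) :
    derivedSeries Q (Nat.factorial H'.index + d) = ⊥ := by
  set K : Subgroup Q := H'.normalCore with hKdef
  have hKle : K ≤ H' := Subgroup.normalCore_le H'
  haveI : K.Normal := Subgroup.normalCore_normal H'
  -- the quotient by K has cardinality at most (H'.index)!
  have hcardQK : Nat.card (Q ⧸ K) ≤ Nat.factorial H'.index := by
    have h1 : Nat.card (Q ⧸ K) = K.index := (Subgroup.index_eq_card K).symm
    have h2 : K.index = Nat.card (MulAction.toPermHom Q (Q ⧸ H')).range := by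
      rw [hKdef, Subgroup.normalCore_eq_ker, Subgroup.index_ker]
    have h3 : Nat.card (MulAction.toPermHom Q (Q ⧸ H')).range ≤
        Nat.card (Equiv.Perm (Q ⧸ H')) :=
      Nat.card_le_card_of_injective _ Subtype.coe_injective
    have h4 : Nat.card (Equiv.Perm (Q ⧸ H')) = Nat.factorial (Nat.card (Q ⧸ H')) := by
      haveI := Fintype.ofFinite (Q ⧸ H')
      haveI : DecidableEq (Q ⧸ H') := Classical.decEq _
      simp [Nat.card_eq_fintype_card, Fintype.card_perm]
    have h5 : Nat.card (Q ⧸ H') = H'.index := (Subgroup.index_eq_card H').symm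
    rw [h1, h2]
    calc Nat.card (MulAction.toPermHom Q (Q ⧸ H')).range
        ≤ Nat.card (Equiv.Perm (Q ⧸ H')) := h3
      _ = Nat.factorial H'.index := by rw [h4, h5]
  -- the quotient has derived length at most (H'.index)!
  have hQK : derivedSeries (Q ⧸ K) (Nat.factorial H'.index) = ⊥ :=
    derivedSeries_eq_bot_of_card_le _ _ (inferInstance : Group.IsSolvable (Q ⧸ K)) hcardQK
  -- hence derivedSeries Q (Nat.factorial H'.index) ≤ K
  have hle : derivedSeries Q (Nat.factorial H'.index) ≤ K := by
    have hmap : (derivedSeries Q (Nat.factorial H'.index)).map (QuotientGroup.mk' K) = ⊥ := by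
      rw [map_derivedSeries_eq (QuotientGroup.mk'_surjective K), hQK]
    have := (Subgroup.map_eq_bot_iff _).mp hmap
    rwa [QuotientGroup.ker_mk'] at this
  -- K has derived length at most d
  have hKd : (derivedSeries ↥K d).map K.subtype = ⊥ := by
    have hsub : K.subtype = H'.subtype.comp (Subgroup.inclusion hKle) :=
      (Subgroup.subtype_comp_inclusion hKle).symm
    rw [hsub, ← Subgroup.map_map]
    have h1 : (derivedSeries ↥K d).map (Subgroup.inclusion hKle) ≤ derivedSeries ↥H' d :=
      map_derivedSeries_le_derivedSeries (Subgroup.inclusion hKle) d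
    rw [hd] at h1
    rw [le_bot_iff.mp h1, Subgroup.map_bot]
  have := derivedSeries_add_le_map K (Nat.factorial H'.index) d hle
  rw [hKd] at this
  exact le_bot_iff.mp this

theorem solvable_of_virtually_solvable_residuallyP (G : Type*) [Group G]
    (p : ℕ) (hp : p.Prime) (hres : ResiduallyP G p)
    (hvs : ∃ H : Subgroup G, H.FiniteIndex ∧ IsSolvable ↥H) :
    IsSolvable G := by
  obtain ⟨H, hfi, hsol⟩ := hvs
  obtain ⟨d, hd⟩ := hsol.solvable
  set m := H.index with hm
  have hm0 : m ≠ 0 := hfi.index_ne_zero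
  refine ⟨⟨Nat.factorial m + d, ?_⟩⟩
  rw [Subgroup.eq_bot_iff_forall]
  intro g hg
  by_contra hg1
  obtain ⟨N, hN, ⟨e, he⟩, hgN⟩ := hres g hg1
  haveI := hN
  haveI : N.FiniteIndex := ⟨by rw [he]; exact pow_ne_zero _ hp.pos.ne'⟩
  haveI : Finite (G ⧸ N) := N.finite_quotient_of_finiteIndex
  haveI : Fact p.Prime := ⟨hp⟩
  have hcardQ : Nat.card (G ⧸ N) = p ^ e := by
    rw [← Subgroup.index_eq_card, he]
  have hpQ : IsPGroup p (G ⧸ N) := IsPGroup.of_card hcardQ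
  haveI : Group.IsNilpotent (G ⧸ N) := hpQ.isNilpotent
  haveI : Group.IsSolvable (G ⧸ N) := inferInstance
  set π := QuotientGroup.mk' N with hπ
  set H' : Subgroup (G ⧸ N) := H.map π with hH'
  -- H' has derived length at most d
  have hH'd : derivedSeries ↥H' d = ⊥ := by
    have := map_derivedSeries_eq (f := π.subgroupMap H) (π.subgroupMap_surjective H) d
    rw [hd, Subgroup.map_bot] at this
    exact this.symm
  -- the index of H' divides m
  have hidx : H'.index ∣ m :=
    H.index_map_dvd (QuotientGroup.mk'_surjective N)
  have hidxle : H'.index ≤ m := Nat.le_of_dvd (Nat.pos_of_ne_zero hm0) hidx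
  -- so the quotient has derived length at most Nat.factorial m + d
  have hQ : derivedSeries (G ⧸ N) (Nat.factorial m + d) = ⊥ := by
    refine derivedSeries_eq_bot_mono ?_ (derivedSeries_eq_bot_of_subgroup H' d hH'd)
    exact Nat.add_le_add_right (Nat.factorial_le hidxle) d
  -- conclude : π g = 1, hence g ∈ N, contradiction
  have hmem : π g ∈ derivedSeries (G ⧸ N) (Nat.factorial m + d) :=
    map_derivedSeries_le_derivedSeries π (Nat.factorial m + d) ⟨g, hg, rfl⟩
  rw [hQ, Subgroup.mem_bot] at hmem
  have : g ∈ N := by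
    have : g ∈ π.ker := hmem
    rwa [QuotientGroup.ker_mk'] at this
  exact hgN this
end
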